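/- arXiv:1509.05902 — 2 statements merged into one kernel-verified Lean document; each statement's English description precedes it below -/
import Mathlib

section
/- (Sum-of-squared-logarithms inequality) Let x, y be strictly positive vectors in ℝ^n with e_k(x) ≤ e_k(y) for k = 1,…,n−1 and e_n(x) = e_n(y). Then Σ_{i=1}^n (log x_i)^2 ≤ Σ_{i=1}^n (log y_i)^2. -/
/-!
For `x > 0` the kernel `g(x, t) = sqLogKernel x t` can be written as
`g(x, t) = ∫₁ˣ s⁻¹ ((1 + t)⁻¹ - (s + t)⁻¹) ds`; swapping the integrals, with
`∫₀^∞ ((1 + t)⁻¹ - (s + t)⁻¹) dt = log s`, gives `∫₀^∞ g(x, t) dt = (log x)² / 2`.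
For fixed `t`, `∑ᵢ g(xᵢ, t)` depends only on `∏ᵢ xᵢ` and, increasingly, on
`∏ᵢ (xᵢ + t) = ∑ₖ eₖ(x) tⁿ⁻ᵏ`. So the hypotheses give `∑ᵢ g(xᵢ, t) ≤ ∑ᵢ g(yᵢ, t)` for all `t > 0`,
and integrating in `t` gives the inequality.
-/

open Finset Real

noncomputable def esymm (n k : ℕ) (x : Fin n → ℝ) : ℝ :=
  ∑ s ∈ Finset.powersetCard k (Finset.univ : Finset (Fin n)), ∏ i ∈ s, x i

open MeasureTheory Set Filter Topology Interval

lemma integrableOn_Ioi_inv_add_sq {m : ℝ} (hm : 0 < m) :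
    IntegrableOn (fun t : ℝ => ((t + m) ^ 2)⁻¹) (Ioi 0) := by
  refine (integrableOn_add_rpow_Ioi_of_lt (a := -2) (by norm_num) (by linarith)).congr_fun
    (fun t ht => ?_) measurableSet_Ioi
  have : 0 ≤ t + m := by linarith [mem_Ioi.mp ht]
  simp [rpow_neg this]

lemma abs_inv_one_add_sub_inv_add_le {a s t : ℝ} (ha : 0 < a) (ha1 : a ≤ 1) (has : a ≤ s)
    (ht : 0 ≤ t) : |(1 + t)⁻¹ - (s + t)⁻¹| ≤ |s - 1| * ((t + a) ^ 2)⁻¹ := by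
  have hprod : (t + a) ^ 2 ≤ (1 + t) * (s + t) := by nlinarith
  have h1 : 0 < 1 + t := by linarith
  have h2 : 0 < s + t := by linarith
  rw [show (1 + t)⁻¹ - (s + t)⁻¹ = (s - 1) / ((1 + t) * (s + t)) by field_simp; ring,
    abs_div, abs_of_pos (mul_pos h1 h2), div_eq_mul_inv]
  gcongr

lemma integrableOn_Ioi_inv_one_add_sub_inv_add {s : ℝ} (hs : 0 < s) :
    IntegrableOn (fun t : ℝ => (1 + t)⁻¹ - (s + t)⁻¹) (Ioi 0) := by
  have hm : 0 < min 1 s := lt_min one_pos hs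
  refine ((integrableOn_Ioi_inv_add_sq hm).const_mul |s - 1|).mono' ?_ ?_
  · refine ContinuousOn.aestronglyMeasurable (fun t ht => ?_) measurableSet_Ioi
    have : (0 : ℝ) < t := ht
    exact ContinuousAt.continuousWithinAt (by fun_prop (disch := positivity))
  · filter_upwards [ae_restrict_mem measurableSet_Ioi] with t ht
    exact abs_inv_one_add_sub_inv_add_le hm (min_le_left _ _) (min_le_right _ _) (le_of_lt ht)

lemma tendsto_log_one_add_sub_log_add (s : ℝ) :
    Tendsto (fun t : ℝ => log (1 + t) - log (s + t)) atTop (𝓝 0) := by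
  simpa [add_comm] using (tendsto_log_comp_add_sub_log 1).sub (tendsto_log_comp_add_sub_log s)

lemma integral_Ioi_inv_one_add_sub_inv_add {s : ℝ} (hs : 0 < s) :
    ∫ t in Ioi (0 : ℝ), ((1 + t)⁻¹ - (s + t)⁻¹) = log s := by
  rw [integral_Ioi_of_hasDerivAt_of_tendsto' (fun t ht => ?_)
    (integrableOn_Ioi_inv_one_add_sub_inv_add hs) (tendsto_log_one_add_sub_log_add s)]
  · simp
  · have ht : (0 : ℝ) ≤ t := ht
    simpa using (((hasDerivAt_id t).const_add 1).log (by positivity)).fun_sub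
      (((hasDerivAt_id t).const_add s).log (by positivity))

noncomputable def sqLogKernel (x t : ℝ) : ℝ :=
  (log (x + t) - log (1 + t) - log x) / t + log x / (1 + t)

lemma pos_of_mem_uIcc_one {x s : ℝ} (hx : 0 < x) (hs : s ∈ uIcc 1 x) : 0 < s :=
  (lt_min one_pos hx).trans_le hs.1

lemma sqLogKernel_eq_intervalIntegral {x t : ℝ} (hx : 0 < x) (ht : 0 < t) :
    sqLogKernel x t = ∫ s in (1 : ℝ)..x, s⁻¹ * ((1 + t)⁻¹ - (s + t)⁻¹) := by
  rw [intervalIntegral.integral_eq_sub_of_hasDerivAt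
    (f := fun s => log s / (1 + t) + (log (s + t) - log s) / t) (fun s hs => ?_)
    (ContinuousOn.intervalIntegrable fun s hs => ?_)]
  · simp only [sqLogKernel, log_one]
    field_simp
    ring
  · have := pos_of_mem_uIcc_one hx hs
    refine (((hasDerivAt_log this.ne').div_const (1 + t)).fun_add
      (((((hasDerivAt_id s).add_const t).log (by positivity)).fun_sub
        (hasDerivAt_log this.ne')).div_const t)).congr_deriv ?_
    simp only [id]
    field_simp
    ring
  · have := pos_of_mem_uIcc_one hx hs
    exact ContinuousAt.continuousWithinAt (by fun_prop (disch := positivity))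

lemma integrable_uncurry_inv_mul_inv_one_add_sub_inv_add {x : ℝ} (hx : 0 < x) :
    Integrable (Function.uncurry fun t s : ℝ => s⁻¹ * ((1 + t)⁻¹ - (s + t)⁻¹))
      ((volume.restrict (Ioi 0)).prod (volume.restrict (Ι 1 x))) := by
  have hm : 0 < min 1 x := lt_min one_pos hx
  have hpos {s : ℝ} (hs : s ∈ Ι 1 x) : 0 < s :=
    pos_of_mem_uIcc_one hx (uIoc_subset_uIcc hs)
  have hbound : Integrable (fun p : ℝ × ℝ => ((p.1 + min 1 x) ^ 2)⁻¹ * (p.2⁻¹ * |p.2 - 1|))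
      ((volume.restrict (Ioi 0)).prod (volume.restrict (Ι 1 x))) := by
    refine (integrableOn_Ioi_inv_add_sq hm).mul_prod (f := fun t => ((t + min 1 x) ^ 2)⁻¹)
      (g := fun s => s⁻¹ * |s - 1|) ?_
    refine (ContinuousOn.integrableOn_uIcc fun s hs => ?_).mono_set uIoc_subset_uIcc
    have := pos_of_mem_uIcc_one hx hs
    exact ContinuousAt.continuousWithinAt (by fun_prop (disch := positivity))
  rw [Measure.prod_restrict] at hbound ⊢
  refine hbound.mono' ?_ ?_
  · refine ContinuousOn.aestronglyMeasurable (fun p hp => ?_)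
      (measurableSet_Ioi.prod measurableSet_uIoc)
    have h1 : (0 : ℝ) < p.1 := hp.1
    have h2 := hpos hp.2
    exact ContinuousAt.continuousWithinAt (by fun_prop (disch := positivity))
  · filter_upwards [ae_restrict_mem (measurableSet_Ioi.prod measurableSet_uIoc)]
      with ⟨t, s⟩ ⟨ht, hs⟩
    have hs0 := hpos hs
    rw [Function.uncurry_apply_pair, norm_mul, norm_inv, Real.norm_of_nonneg hs0.le]
    calc s⁻¹ * ‖(1 + t)⁻¹ - (s + t)⁻¹‖ ≤ s⁻¹ * (|s - 1| * ((t + min 1 x) ^ 2)⁻¹) := by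
          gcongr
          exact abs_inv_one_add_sub_inv_add_le hm (min_le_left _ _) hs.1.le (le_of_lt ht)
      _ = ((t + min 1 x) ^ 2)⁻¹ * (s⁻¹ * |s - 1|) := by ring

lemma sqLogKernel_eqOn_integral_uIoc {x : ℝ} (hx : 0 < x) :
    EqOn (sqLogKernel x) (fun t => (if 1 ≤ x then 1 else -1 : ℝ) •
      ∫ s in Ι 1 x, s⁻¹ * ((1 + t)⁻¹ - (s + t)⁻¹)) (Ioi 0) := fun t ht => by
  rw [sqLogKernel_eq_intervalIntegral hx ht, intervalIntegral.intervalIntegral_eq_integral_uIoc]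

lemma integrableOn_sqLogKernel {x : ℝ} (hx : 0 < x) : IntegrableOn (sqLogKernel x) (Ioi 0) :=
  IntegrableOn.congr_fun
    ((integrable_uncurry_inv_mul_inv_one_add_sub_inv_add hx).integral_prod_left.smul
      (if 1 ≤ x then 1 else -1 : ℝ))
    (sqLogKernel_eqOn_integral_uIoc hx).symm measurableSet_Ioi

lemma integral_sqLogKernel {x : ℝ} (hx : 0 < x) :
    ∫ t in Ioi 0, sqLogKernel x t = log x ^ 2 / 2 := by
  have hinner : ∫ s in Ι 1 x, ∫ t in Ioi 0, s⁻¹ * ((1 + t)⁻¹ - (s + t)⁻¹) =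
      ∫ s in Ι 1 x, s⁻¹ * log s := by
    refine setIntegral_congr_fun measurableSet_uIoc fun s hs => ?_
    rw [integral_const_mul, integral_Ioi_inv_one_add_sub_inv_add
      (pos_of_mem_uIcc_one hx (uIoc_subset_uIcc hs))]
  have hftc : ∫ s in (1 : ℝ)..x, s⁻¹ * log s = log x ^ 2 / 2 := by
    rw [intervalIntegral.integral_eq_sub_of_hasDerivAt (f := fun s => log s ^ 2 / 2)
      (fun s hs => ?_) (ContinuousOn.intervalIntegrable fun s hs => ?_)]
    · simp
    · refine (((hasDerivAt_log (pos_of_mem_uIcc_one hx hs).ne').pow 2).div_const 2).congr_deriv ?_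
      ring
    · have := pos_of_mem_uIcc_one hx hs
      exact ContinuousAt.continuousWithinAt (by fun_prop (disch := positivity))
  rw [setIntegral_congr_fun measurableSet_Ioi (sqLogKernel_eqOn_integral_uIoc hx), integral_smul,
    integral_integral_swap (integrable_uncurry_inv_mul_inv_one_add_sub_inv_add hx), hinner,
    ← intervalIntegral.intervalIntegral_eq_integral_uIoc, hftc]

lemma sum_sqLogKernel {ι : Type*} [Fintype ι] {x : ι → ℝ} (hx : ∀ i, 0 < x i) {t : ℝ}
    (ht : 0 ≤ t) : ∑ i, sqLogKernel (x i) t =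
      (log (∏ i, (x i + t)) - Fintype.card ι * log (1 + t) - log (∏ i, x i)) / t +
        log (∏ i, x i) / (1 + t) := by
  have hxt (i : ι) : x i + t ≠ 0 := by linarith [hx i]
  rw [log_prod fun i _ => (hx i).ne', log_prod fun i _ => hxt i]
  simp only [sqLogKernel, Finset.sum_add_distrib, ← Finset.sum_div, Finset.sum_sub_distrib,
    Finset.sum_const, Finset.card_univ, nsmul_eq_mul]

lemma sum_sqLogKernel_le {ι : Type*} [Fintype ι] {x y : ι → ℝ} (hx : ∀ i, 0 < x i)
    (hy : ∀ i, 0 < y i) (hprod : ∏ i, x i = ∏ i, y i) {t : ℝ} (ht : 0 ≤ t)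
    (hle : ∏ i, (x i + t) ≤ ∏ i, (y i + t)) :
    ∑ i, sqLogKernel (x i) t ≤ ∑ i, sqLogKernel (y i) t := by
  rw [sum_sqLogKernel hx ht, sum_sqLogKernel hy ht, hprod]
  gcongr
  exact Finset.prod_pos fun i _ => by linarith [hx i]

lemma integral_sum_sqLogKernel {ι : Type*} [Fintype ι] {x : ι → ℝ} (hx : ∀ i, 0 < x i) :
    ∫ t in Ioi 0, ∑ i, sqLogKernel (x i) t = (∑ i, log (x i) ^ 2) / 2 := by
  rw [integral_finsetSum _ fun i _ => integrableOn_sqLogKernel (hx i), Finset.sum_div]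
  exact Finset.sum_congr rfl fun i _ => integral_sqLogKernel (hx i)

theorem sum_sq_log_le_of_prod_add_le {ι : Type*} [Fintype ι] {x y : ι → ℝ}
    (hx : ∀ i, 0 < x i) (hy : ∀ i, 0 < y i) (hprod : ∏ i, x i = ∏ i, y i)
    (hle : ∀ t, 0 < t → ∏ i, (x i + t) ≤ ∏ i, (y i + t)) :
    ∑ i, log (x i) ^ 2 ≤ ∑ i, log (y i) ^ 2 := by
  have h := setIntegral_mono_on
    (integrable_finsetSum _ fun i _ => integrableOn_sqLogKernel (hx i))
    (integrable_finsetSum _ fun i _ => integrableOn_sqLogKernel (hy i)) measurableSet_Ioi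
    fun t ht => sum_sqLogKernel_le hx hy hprod (le_of_lt ht) (hle t ht)
  rw [integral_sum_sqLogKernel hx, integral_sum_sqLogKernel hy] at h
  linarith

lemma prod_add_eq_sum_esymm (n : ℕ) (x : Fin n → ℝ) (t : ℝ) :
    ∏ i, (x i + t) = ∑ k ∈ range (n + 1), esymm n k x * t ^ (n - k) := by
  rw [Finset.prod_add, Finset.sum_powerset, Finset.card_univ, Fintype.card_fin]
  refine Finset.sum_congr rfl fun k _ => ?_
  rw [esymm, Finset.sum_mul]
  refine Finset.sum_congr rfl fun s hs => ?_
  rw [Finset.prod_const, Finset.card_univ_sdiff, Fintype.card_fin,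
    (Finset.mem_powersetCard.mp hs).2]

lemma esymm_zero (n : ℕ) (x : Fin n → ℝ) : esymm n 0 x = 1 := by
  simp [esymm]

lemma esymm_self (n : ℕ) (x : Fin n → ℝ) : esymm n n x = ∏ i, x i := by
  have h := Finset.powersetCard_self (Finset.univ : Finset (Fin n))
  rw [Finset.card_univ, Fintype.card_fin] at h
  rw [esymm, h, Finset.sum_singleton]

lemma prod_add_le_prod_add_of_esymm_le {n : ℕ} {x y : Fin n → ℝ}
    (h : ∀ k ≤ n, esymm n k x ≤ esymm n k y) {t : ℝ} (ht : 0 ≤ t) :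
    ∏ i, (x i + t) ≤ ∏ i, (y i + t) := by
  rw [prod_add_eq_sum_esymm, prod_add_eq_sum_esymm]
  gcongr with k hk
  exact h k (Nat.lt_succ_iff.mp (Finset.mem_range.mp hk))

theorem stmt_5 (n : ℕ) (x y : Fin n → ℝ)
    (hx : ∀ i, 0 < x i) (hy : ∀ i, 0 < y i)
    (hE : ∀ k, 1 ≤ k → k ≤ n - 1 → esymm n k x ≤ esymm n k y)
    (hEn : esymm n n x = esymm n n y) :
    ∑ i, (Real.log (x i)) ^ 2 ≤ ∑ i, (Real.log (y i)) ^ 2 := by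
  have hle : ∀ k ≤ n, esymm n k x ≤ esymm n k y := by
    intro k hk
    rcases Nat.eq_zero_or_pos k with rfl | hk0
    · rw [esymm_zero, esymm_zero]
    rcases hk.lt_or_eq with hlt | rfl
    · exact hE k hk0 (by omega)
    · exact hEn.le
  refine sum_sq_log_le_of_prod_add_le hx hy ?_ fun t ht =>
    prod_add_le_prod_add_of_esymm_le hle ht.le
  rwa [← esymm_self, ← esymm_self]
end

section
/- Let x, y be strictly positive probability vectors in ℝ^n and α ∈ (0,1) ∪ (1,2]. If e_k(x) ≤ e_k(y) for all k = 1,…,n, then the Rényi entropy satisfies H_α(x) ≤ H_α(y), where H_α(x) = (1/(1−α)) log(Σ_i x_i^α). -/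
open Finset Real

/-- Rényi entropy of order α of a probability vector. -/
noncomputable def renyiEntropy (n : ℕ) (α : ℝ) (x : Fin n → ℝ) : ℝ :=
  (1 / (1 - α)) * Real.log (∑ i, (x i) ^ α)

/-!
For `0 < α < 1` and `1 < α < 2` the substitution `u ↦ t u` gives, with constants `c_α > 0`,
`t ^ α = c_α ∫₀^∞ log (1 + t u) u^(-1-α) du`, respectively
`t ^ α = c_α ∫₀^∞ (t u - log (1 + t u)) u^(-1-α) du`.
Summing over the coordinates, `∑ i, x i ^ α` becomes an integral of
`∑ i, log (1 + x i u) = log ∑ k, e_k(x) u ^ k`, which increases with the `e_k`; for `α > 1` the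
linear terms `∑ i, x i u = u` agree for both probability vectors. The case `α = 2` follows by
continuity in the exponent, and the sign of `1 - α` turns the comparison of power sums into the
comparison of entropies.
-/

theorem prod_one_add_mul_eq_sum_esymm (n : ℕ) (x : Fin n → ℝ) (u : ℝ) :
    ∏ i, (1 + x i * u) = ∑ k ∈ range (n + 1), esymm n k x * u ^ k := by
  rw [prod_one_add, sum_powerset, card_univ, Fintype.card_fin]
  refine sum_congr rfl fun k _ => ?_
  rw [esymm, sum_mul]
  refine sum_congr rfl fun s hs => ?_
  rw [prod_mul_distrib, prod_const, (mem_powersetCard.mp hs).2]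

theorem prod_one_add_mul_le_of_esymm_le {n : ℕ} {x y : Fin n → ℝ}
    (hE : ∀ k, 1 ≤ k → k ≤ n → esymm n k x ≤ esymm n k y) {u : ℝ} (hu : 0 ≤ u) :
    ∏ i, (1 + x i * u) ≤ ∏ i, (1 + y i * u) := by
  rw [prod_one_add_mul_eq_sum_esymm, prod_one_add_mul_eq_sum_esymm]
  refine sum_le_sum fun k hk => ?_
  rcases Nat.eq_zero_or_pos k with rfl | hk0
  · simp [esymm]
  · exact mul_le_mul_of_nonneg_right (hE k hk0 (Nat.lt_succ_iff.mp (mem_range.mp hk)))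
      (pow_nonneg hu k)

theorem sum_log_one_add_mul_le_of_esymm_le {n : ℕ} {x y : Fin n → ℝ}
    (hx : ∀ i, 0 ≤ x i) (hy : ∀ i, 0 ≤ y i)
    (hE : ∀ k, 1 ≤ k → k ≤ n → esymm n k x ≤ esymm n k y) {u : ℝ} (hu : 0 ≤ u) :
    ∑ i, log (1 + x i * u) ≤ ∑ i, log (1 + y i * u) := by
  have hpos : ∀ z : Fin n → ℝ, (∀ i, 0 ≤ z i) → ∀ i, 0 < 1 + z i * u :=
    fun z hz i => by nlinarith [hz i]
  rw [← log_prod fun i _ => (hpos x hx i).ne', ← log_prod fun i _ => (hpos y hy i).ne']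
  exact log_le_log (prod_pos fun i _ => hpos x hx i) (prod_one_add_mul_le_of_esymm_le hE hu)

open MeasureTheory Set

theorem setIntegral_pos_of_forall_pos {X : Type*} [MeasurableSpace X] {μ : Measure X}
    {s : Set X} {f : X → ℝ} (hs : MeasurableSet s) (hμs : μ s ≠ 0) (hf : IntegrableOn f s μ)
    (hpos : ∀ x ∈ s, 0 < f x) : 0 < ∫ x in s, f x ∂μ := by
  have hnonneg : 0 ≤ᵐ[μ.restrict s] f := ae_restrict_of_forall_mem hs fun x hx => (hpos x hx).le
  rw [setIntegral_pos_iff_support_of_nonneg_ae hnonneg hf,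
    inter_eq_right.mpr fun x hx => Function.mem_support.mpr (hpos x hx).ne']
  exact pos_iff_ne_zero.mpr hμs

theorem integrableOn_mul_rpow_Ioi_zero {g : ℝ → ℝ} {α p q C D : ℝ} (hg : Measurable g)
    (hp : α < p) (hq : q < α) (hg0 : ∀ u, 0 < u → 0 ≤ g u)
    (hsmall : ∀ u ∈ Set.Ioc 0 1, g u ≤ C * u ^ p) (hlarge : ∀ u ∈ Set.Ioi 1, g u ≤ D * u ^ q) :
    IntegrableOn (fun u => g u * u ^ (-1 - α)) (Ioi 0) := by
  have hmeas : Measurable fun u : ℝ => g u * u ^ (-1 - α) := by fun_prop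
  have hbound : ∀ {c r u : ℝ}, 0 < u → g u ≤ c * u ^ r →
      ‖g u * u ^ (-1 - α)‖ ≤ c * u ^ (r - 1 - α) := by
    intro c r u hu hle
    have hgu := hg0 u hu
    rw [norm_of_nonneg (by positivity), show r - 1 - α = r + (-1 - α) by ring, rpow_add hu,
      ← mul_assoc]
    exact mul_le_mul_of_nonneg_right hle (by positivity)
  rw [← Ioc_union_Ioi_eq_Ioi zero_le_one]
  refine IntegrableOn.union ?_ ?_
  · have hint : IntegrableOn (fun u : ℝ => C * u ^ (p - 1 - α)) (Ioc 0 1) :=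
      ((intervalIntegrable_iff_integrableOn_Ioc_of_le zero_le_one).mp
        (intervalIntegral.intervalIntegrable_rpow' (by linarith))).const_mul C
    exact hint.mono' hmeas.aestronglyMeasurable
      (ae_restrict_of_forall_mem measurableSet_Ioc fun u hu => hbound hu.1 (hsmall u hu))
  · have hint : IntegrableOn (fun u : ℝ => D * u ^ (q - 1 - α)) (Ioi 1) :=
      (integrableOn_Ioi_rpow_of_lt (by linarith) zero_lt_one).const_mul D
    exact hint.mono' hmeas.aestronglyMeasurable (ae_restrict_of_forall_mem measurableSet_Ioi
      fun u hu => hbound (zero_lt_one.trans hu) (hlarge u hu))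

section Scaling

variable {φ : ℝ → ℝ} {α c : ℝ}

theorem rpow_neg_one_sub_eq_mul_rpow (hc : 0 < c) {u : ℝ} (hu : 0 < u) :
    u ^ (-1 - α) = c ^ (1 + α) * (c * u) ^ (-1 - α) := by
  rw [mul_rpow hc.le hu.le, ← mul_assoc, ← rpow_add hc]
  simp

theorem integrableOn_comp_mul_left_mul_rpow
    (hφ : IntegrableOn (fun u => φ u * u ^ (-1 - α)) (Ioi 0)) (hc : 0 < c) :
    IntegrableOn (fun u => φ (c * u) * u ^ (-1 - α)) (Ioi 0) := by
  have hscaled : IntegrableOn (fun u => φ (c * u) * (c * u) ^ (-1 - α)) (Ioi 0) :=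
    (integrableOn_Ioi_comp_mul_left_iff (fun u => φ u * u ^ (-1 - α)) 0 hc).mpr
      (by rwa [mul_zero])
  refine IntegrableOn.congr_fun (hscaled.const_mul (c ^ (1 + α))) (fun u hu => ?_)
    measurableSet_Ioi
  rw [rpow_neg_one_sub_eq_mul_rpow hc hu]
  ring

theorem integral_comp_mul_left_mul_rpow (hc : 0 < c) :
    ∫ u in Ioi 0, φ (c * u) * u ^ (-1 - α) = c ^ α * ∫ u in Ioi 0, φ u * u ^ (-1 - α) := by
  have hscaled := integral_comp_mul_left_Ioi (fun u => φ u * u ^ (-1 - α)) 0 hc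
  rw [mul_zero] at hscaled
  calc ∫ u in Ioi 0, φ (c * u) * u ^ (-1 - α)
      = ∫ u in Ioi 0, c ^ (1 + α) * (φ (c * u) * (c * u) ^ (-1 - α)) :=
        setIntegral_congr_fun measurableSet_Ioi fun u hu => by
          rw [rpow_neg_one_sub_eq_mul_rpow hc hu]; ring
    _ = c ^ (1 + α) * c⁻¹ * ∫ u in Ioi 0, φ u * u ^ (-1 - α) := by
        rw [integral_const_mul, hscaled, smul_eq_mul, mul_assoc]
    _ = c ^ α * ∫ u in Ioi 0, φ u * u ^ (-1 - α) := by
        rw [← rpow_neg_one, ← rpow_add hc, add_neg_cancel_comm]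

variable {ι : Type*} [Fintype ι] {x y : ι → ℝ}

theorem sum_rpow_mul_integral_eq (hx : ∀ i, 0 < x i)
    (hφ : IntegrableOn (fun u => φ u * u ^ (-1 - α)) (Ioi 0)) :
    (∑ i, x i ^ α) * ∫ u in Ioi 0, φ u * u ^ (-1 - α)
      = ∫ u in Ioi 0, (∑ i, φ (x i * u)) * u ^ (-1 - α) := by
  simp_rw [sum_mul]
  rw [integral_finsetSum _ fun i _ => integrableOn_comp_mul_left_mul_rpow hφ (hx i)]
  exact sum_congr rfl fun i _ => (integral_comp_mul_left_mul_rpow (hx i)).symm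

theorem sum_rpow_le_sum_rpow_of_sum_comp_le (hx : ∀ i, 0 < x i) (hy : ∀ i, 0 < y i)
    (hφ : IntegrableOn (fun u => φ u * u ^ (-1 - α)) (Ioi 0))
    (hK : 0 < ∫ u in Ioi 0, φ u * u ^ (-1 - α))
    (hxy : ∀ u, 0 < u → ∑ i, φ (x i * u) ≤ ∑ i, φ (y i * u)) :
    ∑ i, x i ^ α ≤ ∑ i, y i ^ α := by
  have hint : ∀ z : ι → ℝ, (∀ i, 0 < z i) →
      IntegrableOn (fun u => (∑ i, φ (z i * u)) * u ^ (-1 - α)) (Ioi 0) := fun z hz => by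
    simp_rw [sum_mul]
    exact integrable_finsetSum _ fun i _ => integrableOn_comp_mul_left_mul_rpow hφ (hz i)
  rw [← mul_le_mul_iff_left₀ hK, sum_rpow_mul_integral_eq hx hφ, sum_rpow_mul_integral_eq hy hφ]
  exact setIntegral_mono_on (hint x hx) (hint y hy) measurableSet_Ioi fun u hu =>
    mul_le_mul_of_nonneg_right (hxy u hu) (rpow_pos_of_pos hu _).le

end Scaling

theorem integrableOn_log_one_add_mul_rpow {α : ℝ} (h0 : 0 < α) (h1 : α < 1) :
    IntegrableOn (fun u => log (1 + u) * u ^ (-1 - α)) (Ioi 0) := by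
  have hε : 0 < α / 2 := by positivity
  refine integrableOn_mul_rpow_Ioi_zero (p := 1) (q := α / 2) (C := 1)
    (D := 2 ^ (α / 2) / (α / 2)) (by fun_prop) h1 (by linarith)
    (fun u hu => log_nonneg (by linarith)) (fun u hu => ?_) (fun u hu => ?_)
  · rw [one_mul, rpow_one]
    linarith [log_le_sub_one_of_pos (show 0 < 1 + u by linarith [hu.1])]
  · have hu0 : (0 : ℝ) < u := zero_lt_one.trans hu
    calc log (1 + u) ≤ (1 + u) ^ (α / 2) / (α / 2) := log_le_rpow_div (by linarith) hε
      _ ≤ (2 * u) ^ (α / 2) / (α / 2) := by gcongr; linarith [show (1 : ℝ) < u from hu]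
      _ = 2 ^ (α / 2) / (α / 2) * u ^ (α / 2) := by rw [mul_rpow zero_le_two hu0.le]; ring

theorem integrableOn_sub_log_one_add_mul_rpow {α : ℝ} (h1 : 1 < α) (h2 : α < 2) :
    IntegrableOn (fun u => (u - log (1 + u)) * u ^ (-1 - α)) (Ioi 0) := by
  refine integrableOn_mul_rpow_Ioi_zero (p := 2) (q := 1) (C := 1) (D := 1)
    (by fun_prop) h2 h1 (fun u hu => ?_) (fun u hu => ?_) (fun u hu => ?_)
  · linarith [log_le_sub_one_of_pos (show 0 < 1 + u by linarith)]
  · have h1u : 0 < 1 + u := by linarith [hu.1]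
    calc u - log (1 + u) ≤ u - (1 - (1 + u)⁻¹) := by linarith [one_sub_inv_le_log_of_pos h1u]
      _ = u ^ 2 / (1 + u) := by field_simp; ring
      _ ≤ u ^ 2 := div_le_self (sq_nonneg u) (by linarith [hu.1])
      _ = 1 * u ^ (2 : ℝ) := by rw [one_mul, rpow_two]
  · rw [one_mul, rpow_one]
    linarith [log_nonneg (show (1 : ℝ) ≤ 1 + u by linarith [show (1 : ℝ) < u from hu])]

section Esymm

variable {n : ℕ} {x y : Fin n → ℝ} {α : ℝ}

theorem sum_rpow_le_of_esymm_le_of_lt_one (hx : ∀ i, 0 < x i) (hy : ∀ i, 0 < y i)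
    (hE : ∀ k, 1 ≤ k → k ≤ n → esymm n k x ≤ esymm n k y) (h0 : 0 < α) (h1 : α < 1) :
    ∑ i, x i ^ α ≤ ∑ i, y i ^ α := by
  have hint := integrableOn_log_one_add_mul_rpow h0 h1
  refine sum_rpow_le_sum_rpow_of_sum_comp_le hx hy hint ?_ fun u hu =>
    sum_log_one_add_mul_le_of_esymm_le (fun i => (hx i).le) (fun i => (hy i).le) hE hu.le
  refine setIntegral_pos_of_forall_pos measurableSet_Ioi (by simp) hint fun u hu => ?_
  exact mul_pos (log_pos (by linarith [show (0 : ℝ) < u from hu])) (rpow_pos_of_pos hu _)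

theorem sum_rpow_le_of_esymm_le_of_one_lt_of_lt_two (hx : ∀ i, 0 < x i) (hy : ∀ i, 0 < y i)
    (hx1 : ∑ i, x i = 1) (hy1 : ∑ i, y i = 1)
    (hE : ∀ k, 1 ≤ k → k ≤ n → esymm n k x ≤ esymm n k y) (h1 : 1 < α) (h2 : α < 2) :
    ∑ i, y i ^ α ≤ ∑ i, x i ^ α := by
  have hint := integrableOn_sub_log_one_add_mul_rpow h1 h2
  refine sum_rpow_le_sum_rpow_of_sum_comp_le hy hx hint ?_ fun u hu => ?_
  · refine setIntegral_pos_of_forall_pos measurableSet_Ioi (by simp) hint fun u hu => ?_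
    have hu0 : (0 : ℝ) < u := hu
    have hlog := log_lt_sub_one_of_pos (show 0 < 1 + u by linarith) (by linarith)
    exact mul_pos (by linarith) (rpow_pos_of_pos hu0 _)
  · have hsum : ∀ z : Fin n → ℝ, ∑ i, z i = 1 →
        ∑ i, (z i * u - log (1 + z i * u)) = u - ∑ i, log (1 + z i * u) := fun z hz => by
      rw [sum_sub_distrib, ← sum_mul, hz, one_mul]
    rw [hsum y hy1, hsum x hx1]
    linarith [sum_log_one_add_mul_le_of_esymm_le (fun i => (hx i).le) (fun i => (hy i).le) hE
      hu.le]

theorem continuous_sum_rpow_exponent (hx : ∀ i, 0 < x i) :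
    Continuous fun β : ℝ => ∑ i, x i ^ β :=
  continuous_finsetSum _ fun i _ => continuous_const_rpow (hx i).ne'

theorem sum_rpow_le_of_esymm_le_of_one_lt_of_le_two (hx : ∀ i, 0 < x i) (hy : ∀ i, 0 < y i)
    (hx1 : ∑ i, x i = 1) (hy1 : ∑ i, y i = 1)
    (hE : ∀ k, 1 ≤ k → k ≤ n → esymm n k x ≤ esymm n k y) (h1 : 1 < α) (h2 : α ≤ 2) :
    ∑ i, y i ^ α ≤ ∑ i, x i ^ α := by
  have hclosed : IsClosed {β : ℝ | ∑ i, y i ^ β ≤ ∑ i, x i ^ β} :=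
    isClosed_le (continuous_sum_rpow_exponent hy) (continuous_sum_rpow_exponent hx)
  have hsub : Set.Ioo 1 2 ⊆ {β : ℝ | ∑ i, y i ^ β ≤ ∑ i, x i ^ β} := fun β hβ =>
    sum_rpow_le_of_esymm_le_of_one_lt_of_lt_two hx hy hx1 hy1 hE hβ.1 hβ.2
  refine hclosed.closure_subset_iff.mpr hsub ?_
  rw [closure_Ioo one_lt_two.ne]
  exact ⟨h1.le, h2⟩

end Esymm

theorem renyiEntropy_le_of_lt_one {n : ℕ} {α : ℝ} {x y : Fin n → ℝ} (hα : α < 1)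
    (hx : 0 < ∑ i, x i ^ α) (hxy : ∑ i, x i ^ α ≤ ∑ i, y i ^ α) :
    renyiEntropy n α x ≤ renyiEntropy n α y :=
  mul_le_mul_of_nonneg_left (log_le_log hx hxy) (one_div_nonneg.mpr (by linarith))

theorem renyiEntropy_le_of_one_lt {n : ℕ} {α : ℝ} {x y : Fin n → ℝ} (hα : 1 < α)
    (hy : 0 < ∑ i, y i ^ α) (hyx : ∑ i, y i ^ α ≤ ∑ i, x i ^ α) :
    renyiEntropy n α x ≤ renyiEntropy n α y :=
  mul_le_mul_of_nonpos_left (log_le_log hy hyx) (one_div_nonpos.mpr (by linarith))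

theorem stmt_11 (n : ℕ) (x y : Fin n → ℝ)
    (hx : ∀ i, 0 < x i) (hy : ∀ i, 0 < y i)
    (hx1 : ∑ i, x i = 1) (hy1 : ∑ i, y i = 1)
    (α : ℝ) (hα : α ∈ Set.Ioo (0 : ℝ) 1 ∪ Set.Ioc 1 2)
    (hE : ∀ k, 1 ≤ k → k ≤ n → esymm n k x ≤ esymm n k y) :
    renyiEntropy n α x ≤ renyiEntropy n α y := by
  have hne : (univ : Finset (Fin n)).Nonempty :=
    nonempty_of_sum_ne_zero (f := x) (by rw [hx1]; exact one_ne_zero)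
  have hpos : ∀ z : Fin n → ℝ, (∀ i, 0 < z i) → 0 < ∑ i, z i ^ α := fun z hz =>
    sum_pos (fun i _ => rpow_pos_of_pos (hz i) α) hne
  rcases hα with ⟨h0, h1⟩ | ⟨h1, h2⟩
  · exact renyiEntropy_le_of_lt_one h1 (hpos x hx)
      (sum_rpow_le_of_esymm_le_of_lt_one hx hy hE h0 h1)
  · exact renyiEntropy_le_of_one_lt h1 (hpos y hy)
      (sum_rpow_le_of_esymm_le_of_one_lt_of_le_two hx hy hx1 hy1 hE h1 h2)
end
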